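/- For c > 0, λ_P > 0, and any real r, the unique x > 0 solving c·(log(x/λ_P) − λ_P·max(1/λ_P − 1/x, 0)) = r with r ≥ 0 is given by x = −λ_P / W₀(−exp(−r/c − 1)), where W₀ is the principal branch of the Lambert W function. -/

import Mathlib

/-! For `y < λ_P` the left-hand side is `c · log (y / λ_P) < 0 ≤ r`, so every solution has
`y ≥ λ_P`. There the substitution `v = -λ_P / y ∈ [-1, 0)` turns the equation into
`v · exp v = -exp (-r / c - 1)`, and `v ↦ v · exp v` is injective on `[-1, ∞)`, so `v` is
forced to be `W₀ (-exp (-r / c - 1))`. -/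

open Real Set

/-- `t ↦ t * exp t` is `s ↦ s * log s` composed with `exp`, which maps `[-1, ∞)` into
`[exp (-1), ∞)`. -/
theorem Real.mul_exp_strictMonoOn : StrictMonoOn (fun t : ℝ ↦ t * exp t) (Ici (-1)) := by
  intro s hs t ht hst
  have := mul_log_strictMonoOn (exp_le_exp.2 hs) (exp_le_exp.2 ht) (exp_lt_exp.2 hst)
  simpa only [log_exp, mul_comm (exp _)] using this

lemma neg_div_mem_Ici_neg_one_iff {a y : ℝ} (hy : 0 < y) : -a / y ∈ Ici (-1) ↔ a ≤ y := by
  rw [mem_Ici, le_div_iff₀ hy]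
  constructor <;> intro h <;> linarith

lemma log_div_sub_mul_max_neg_of_lt {a y : ℝ} (hy : 0 < y) (hya : y < a) :
    log (y / a) - a * max (1 / a - 1 / y) 0 < 0 := by
  have ha : 0 < a := hy.trans hya
  rw [max_eq_right (by linarith [one_div_lt_one_div_of_lt hy hya]), mul_zero, sub_zero]
  exact log_neg (div_pos hy ha) ((div_lt_one ha).2 hya)

lemma log_div_sub_mul_max_of_le {a y : ℝ} (ha : 0 < a) (hay : a ≤ y) :
    log (y / a) - a * max (1 / a - 1 / y) 0 = -(log (a / y) - a / y) - 1 := by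
  have hy : 0 < y := ha.trans_le hay
  have hlog : log (a / y) = -log (y / a) := by rw [← log_inv, inv_div]
  rw [max_eq_left (by linarith [one_div_le_one_div_of_le ha hay]), hlog]
  field_simp
  ring

lemma neg_mul_exp_neg_eq_neg_exp_iff {u s : ℝ} (hu : 0 < u) :
    -u * exp (-u) = -exp s ↔ log u - u = s := by
  rw [neg_mul, neg_inj, ← exp_log hu, ← exp_add, exp_eq_exp, log_exp, ← sub_eq_add_neg]

lemma mul_log_div_sub_mul_max_eq_iff {a c r y : ℝ} (ha : 0 < a) (hc : 0 < c) (hr : 0 ≤ r)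
    (hy : 0 < y) :
    c * (log (y / a) - a * max (1 / a - 1 / y) 0) = r ↔
      a ≤ y ∧ -a / y * exp (-a / y) = -exp (-r / c - 1) := by
  rcases lt_or_ge y a with hya | hay
  · have := mul_neg_of_pos_of_neg hc (log_div_sub_mul_max_neg_of_lt hy hya)
    exact iff_of_false (by linarith) fun h ↦ hya.not_ge h.1
  · rw [log_div_sub_mul_max_of_le ha hay, neg_div,
      neg_mul_exp_neg_eq_neg_exp_iff (div_pos ha hy), and_iff_right hay]
    constructor <;> intro h
    · rw [← h]; field_simp; ring
    · rw [h]; field_simp; ring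

/-- For `c > 0`, `λ_P > 0`, and `r ≥ 0`, the unique `x > 0` solving
`c·(log(x/λ_P) − λ_P·max(1/λ_P − 1/x, 0)) = r` is
`x = −λ_P / W₀(−exp(−r/c − 1))`, where `W₀` is the principal Lambert W branch,
characterized by `W₀(z)·e^{W₀(z)} = z` and `W₀(z) ≥ −1` on `[−1/e, ∞)`. -/
theorem stmt_11 (c lamP r : ℝ) (hc : 0 < c) (hlam : 0 < lamP) (hr : 0 ≤ r)
    (W0 : ℝ → ℝ)
    (hW : ∀ z ∈ Set.Ici (-Real.exp (-1)), W0 z * Real.exp (W0 z) = z ∧ -1 ≤ W0 z)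
    (x : ℝ) (hx : x = -lamP / W0 (-Real.exp (-r / c - 1))) :
    0 < x ∧
      c * (Real.log (x / lamP) - lamP * max (1 / lamP - 1 / x) 0) = r ∧
      ∀ y : ℝ, 0 < y →
        c * (Real.log (y / lamP) - lamP * max (1 / lamP - 1 / y) 0) = r → y = x := by
  set z := -exp (-r / c - 1)
  have hz : z ∈ Ici (-exp (-1)) :=
    neg_le_neg (exp_le_exp.2 (by linarith [div_nonneg hr hc.le, neg_div c r]))
  obtain ⟨hwz, hw⟩ := hW z hz
  set w := W0 z
  have hw₀ : w < 0 := neg_of_mul_neg_left (hwz ▸ neg_neg_of_pos (exp_pos _)) (exp_pos w).le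
  have hx₀ : 0 < x := hx ▸ div_pos_of_neg_of_neg (neg_neg_of_pos hlam) hw₀
  have hxw : -lamP / x = w := by rw [hx]; field_simp
  refine ⟨hx₀, (mul_log_div_sub_mul_max_eq_iff hlam hc hr hx₀).2 ⟨?_, hxw ▸ hwz⟩, ?_⟩
  · rwa [← neg_div_mem_Ici_neg_one_iff hx₀, hxw]
  · intro y hy hyr
    obtain ⟨hay, hyz⟩ := (mul_log_div_sub_mul_max_eq_iff hlam hc hr hy).1 hyr
    have hyw : -lamP / y = w :=
      mul_exp_strictMonoOn.injOn ((neg_div_mem_Ici_neg_one_iff hy).2 hay) hw (hyz.trans hwz.symm)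
    rw [hx, ← hyw]
    field_simp
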